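/- arXiv:1703.08564 — 2 statements merged into one kernel-verified Lean document; each statement's English description precedes it below -/
import Mathlib

section
/- With the Bedford-McMullen setup and $\tau > 1$, the measure $\underline{p}_d = \left(T_a^{1/\tau - 1}/\sum_{a'\in S} T_{a'}^{1/\tau}\right)_{(a,b)\in Q}$ maximizes the dimension functional $\dim(\underline{p}) = \frac{h(\underline{p}) + (\tau - 1) h_r(\underline{p})}{\log M}$ over all probability vectors $\underline{p}$ on $Q$, and the maximal value is $\frac{\tau \log \sum_{a\in S} T_a^{1/\tau}}{\log M}$. -/
/-!
Both entropies in `dim p` are bounded by Gibbs' inequality against `p_d` and its row marginal,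
and the resulting cross-entropy does not depend on `p`: since `log p_d(a, b)` and the log of the
`a`-th row marginal of `p_d` are affine in `log T_a` with slopes `1/τ - 1` and `1/τ`, the weight
`τ - 1` makes the `log T_a` terms cancel, leaving `τ log ∑_a T_a^{1/τ}`.
-/

open Real Finset

lemma mul_log_sub_mul_log_le {x y : ℝ} (hx : 0 ≤ x) (hy : 0 < y) :
    x * log y - x * log x ≤ y - x := by
  rcases hx.eq_or_lt with rfl | hx
  · simpa using hy.le
  · have h := mul_le_mul_of_nonneg_left (log_le_sub_one_of_pos (div_pos hy hx)) hx.le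
    rw [log_div hy.ne' hx.ne', mul_sub, mul_sub, mul_div_cancel₀ y hx.ne', mul_one] at h
    exact h

lemma neg_sum_mul_log_le_neg_sum_mul_log {ι : Type*} [Fintype ι] {f g : ι → ℝ}
    (hf : ∀ i, 0 ≤ f i) (hg : ∀ i, 0 < g i) (hfg : ∑ i, f i = ∑ i, g i) :
    -∑ i, f i * log (f i) ≤ -∑ i, f i * log (g i) := by
  have h := sum_le_sum fun i (_ : i ∈ univ) => mul_log_sub_mul_log_le (hf i) (hg i)
  rw [sum_sub_distrib, sum_sub_distrib, hfg] at h
  linarith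

noncomputable section

variable {S : Type*} {P : S → Type*} [∀ a, Fintype (P a)]

def marginal (p : (Σ a, P a) → ℝ) (a : S) : ℝ := ∑ b, p ⟨a, b⟩

lemma marginal_nonneg {p : (Σ a, P a) → ℝ} (hp : ∀ q, 0 ≤ p q) (a : S) : 0 ≤ marginal p a :=
  sum_nonneg fun b _ => hp ⟨a, b⟩

variable [Fintype S]

lemma sum_marginal (p : (Σ a, P a) → ℝ) : ∑ a, marginal p a = ∑ q, p q :=
  (Fintype.sum_sigma p).symm

/-- The numerator `h(p) + (τ - 1) h_r(p)` of the dimension functional. -/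
def dimNumerator (τ : ℝ) (p : (Σ a, P a) → ℝ) : ℝ :=
  (-∑ q, p q * log (p q)) + (τ - 1) * (-∑ a, marginal p a * log (marginal p a))

variable (P) in
def partitionSum (τ : ℝ) : ℝ := ∑ a : S, (Fintype.card (P a) : ℝ) ^ (1 / τ)

variable (P) in
def optimalMeasure (τ : ℝ) (q : Σ a, P a) : ℝ :=
  (Fintype.card (P q.1) : ℝ) ^ (1 / τ - 1) / partitionSum P τ

variable [∀ a, Nonempty (P a)]

lemma partitionSum_pos [Nonempty S] (τ : ℝ) : 0 < partitionSum P τ :=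
  sum_pos (fun _ _ => rpow_pos_of_pos (Nat.cast_pos.2 Fintype.card_pos) _) univ_nonempty

lemma marginal_optimalMeasure (τ : ℝ) (a : S) :
    marginal (optimalMeasure P τ) a = (Fintype.card (P a) : ℝ) ^ (1 / τ) / partitionSum P τ := by
  change ∑ _b : P a, (Fintype.card (P a) : ℝ) ^ (1 / τ - 1) / partitionSum P τ = _
  rw [sum_const, card_univ, nsmul_eq_mul, mul_div_assoc', mul_comm,
    ← rpow_add_one (Nat.cast_pos.2 Fintype.card_pos).ne', sub_add_cancel]

variable [Nonempty S]

lemma optimalMeasure_pos (τ : ℝ) (q : Σ a, P a) : 0 < optimalMeasure P τ q :=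
  div_pos (rpow_pos_of_pos (Nat.cast_pos.2 Fintype.card_pos) _) (partitionSum_pos τ)

lemma marginal_optimalMeasure_pos (τ : ℝ) (a : S) : 0 < marginal (optimalMeasure P τ) a := by
  rw [marginal_optimalMeasure]
  exact div_pos (rpow_pos_of_pos (Nat.cast_pos.2 Fintype.card_pos) _) (partitionSum_pos τ)

lemma sum_optimalMeasure (τ : ℝ) : ∑ q, optimalMeasure P τ q = 1 := by
  rw [← sum_marginal]
  simp only [marginal_optimalMeasure, ← sum_div]
  exact div_self (partitionSum_pos τ).ne'

lemma crossEntropy_optimalMeasure {τ : ℝ} (hτ : τ ≠ 0) {p : (Σ a, P a) → ℝ}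
    (hp : ∑ q, p q = 1) :
    (-∑ q, p q * log (optimalMeasure P τ q)) +
        (τ - 1) * (-∑ a, marginal p a * log (marginal (optimalMeasure P τ) a)) =
      τ * log (partitionSum P τ) := by
  have hZ := (partitionSum_pos (P := P) τ).ne'
  have hT : ∀ a, (0 : ℝ) < Fintype.card (P a) := fun a => Nat.cast_pos.2 Fintype.card_pos
  have hlog_opt : ∀ q : Σ a, P a, log (optimalMeasure P τ q) =
      (1 / τ - 1) * log (Fintype.card (P q.1)) - log (partitionSum P τ) := fun q => by
    rw [optimalMeasure, log_div (rpow_pos_of_pos (hT q.1) _).ne' hZ,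
      log_rpow (hT q.1)]
  have hlog_marg : ∀ a : S, log (marginal (optimalMeasure P τ) a) =
      1 / τ * log (Fintype.card (P a)) - log (partitionSum P τ) := fun a => by
    rw [marginal_optimalMeasure, log_div (rpow_pos_of_pos (hT a) _).ne' hZ,
      log_rpow (hT a)]
  have hrows : ∑ q, p q * log (optimalMeasure P τ q) = ∑ a, marginal p a *
      ((1 / τ - 1) * log (Fintype.card (P a)) - log (partitionSum P τ)) := by
    simp only [Fintype.sum_sigma, hlog_opt, marginal, sum_mul]
  have hconst : τ * log (partitionSum P τ) = ∑ a, marginal p a * (τ * log (partitionSum P τ)) := by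
    rw [← sum_mul, sum_marginal, hp, one_mul]
  rw [hrows, hconst, mul_neg, mul_sum, ← sum_neg_distrib, ← sum_neg_distrib, ← sum_add_distrib]
  refine sum_congr rfl fun a _ => ?_
  rw [hlog_marg]
  field_simp
  ring

lemma dimNumerator_optimalMeasure {τ : ℝ} (hτ : τ ≠ 0) :
    dimNumerator τ (optimalMeasure P τ) = τ * log (partitionSum P τ) :=
  crossEntropy_optimalMeasure hτ (sum_optimalMeasure τ)

lemma dimNumerator_le {τ : ℝ} (hτ : 1 ≤ τ) {p : (Σ a, P a) → ℝ} (hp0 : ∀ q, 0 ≤ p q)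
    (hp1 : ∑ q, p q = 1) : dimNumerator τ p ≤ τ * log (partitionSum P τ) := by
  have hjoint := neg_sum_mul_log_le_neg_sum_mul_log hp0 (optimalMeasure_pos (P := P) τ)
    (by rw [hp1, sum_optimalMeasure])
  have hrow := neg_sum_mul_log_le_neg_sum_mul_log (marginal_nonneg hp0)
    (marginal_optimalMeasure_pos (P := P) τ) (by rw [sum_marginal, sum_marginal, hp1,
      sum_optimalMeasure])
  rw [← crossEntropy_optimalMeasure (by positivity) hp1, dimNumerator]
  gcongr

end

/-- The measure `p_d` maximizes the dimension functional
`dim p = (h(p) + (τ-1) h_r(p)) / log M` over the simplex, with maximal value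
`τ log (∑_a T_a^{1/τ}) / log M`. -/
theorem stmt9 (S : Type*) [Fintype S] [Nonempty S] (P : S → Type*) [∀ a, Fintype (P a)]
    [∀ a, Nonempty (P a)] (M N : ℕ) (hN : 2 ≤ N) (hMN : N < M) :
    let τ : ℝ := Real.log M / Real.log N
    let T : S → ℝ := fun a => Fintype.card (P a)
    let pd : (Σ a : S, P a) → ℝ := fun q => T q.1 ^ (1 / τ - 1) / ∑ a' : S, T a' ^ (1 / τ)
    let dimf : ((Σ a : S, P a) → ℝ) → ℝ := fun p =>
      ((-∑ q : (Σ a : S, P a), p q * Real.log (p q)) +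
          (τ - 1) * (-∑ a : S, (∑ b : P a, p ⟨a, b⟩) * Real.log (∑ b : P a, p ⟨a, b⟩))) /
        Real.log M
    (∀ p : (Σ a : S, P a) → ℝ, (∀ q, 0 ≤ p q) → (∑ q : (Σ a : S, P a), p q) = 1 →
        dimf p ≤ dimf pd) ∧
      dimf pd = τ * Real.log (∑ a : S, T a ^ (1 / τ)) / Real.log M := by
  intro τ T pd dimf
  have hlogN : 0 < log N := log_pos (by exact_mod_cast hN)
  have hlogNM : log N < log M := log_lt_log (by positivity) (by exact_mod_cast hMN)
  have hlogM : 0 < log M := hlogN.trans hlogNM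
  have hτ : 1 < τ := (one_lt_div hlogN).2 hlogNM
  have hdimf : ∀ p, dimf p = dimNumerator τ p / log M := fun p => rfl
  have hval : dimf pd = τ * log (partitionSum P τ) / log M :=
    congrArg (· / log M) (dimNumerator_optimalMeasure (by positivity))
  refine ⟨fun p hp0 hp1 => ?_, hval⟩
  rw [hval, hdimf]
  exact div_le_div_of_nonneg_right (dimNumerator_le hτ.le hp0 hp1) hlogM.le
end

section
/- With the Bedford-McMullen setup where $\psi$ is monotone decreasing on $[h_r(\underline{p}_D), \log R]$: for every $z \in [h_r(\underline{p}_D), \log R]$ and every $\varepsilon > 0$ there exists $N_0$ such that for all $n \geq N_0$, $\#\{\overline{\imath} \in Q^n : h_r(\overline{\imath}) \geq z\} \leq e^{n(\psi(z) + \varepsilon)}$. -/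
/-!
Method of types. The words of `Q^n` are grouped by their letter counts; there are at most
`(n + 1) ^ D` such classes, and the class of a word with empirical distribution `p` has at most
`exp (n h(p))` elements, since each of its words has probability `exp (-n h(p))` under the
i.i.d. law `p^n`. If `h_r(p) ≥ z` then `h_r(p)` lies in `[z, log R]`, so
`h(p) ≤ ψ(h_r(p)) ≤ ψ(z)`, and `(n + 1) ^ D` is eventually below `exp (n ε)`.
-/

open Real Finset Filter

section Entropy

variable {α : Type*} [Fintype α]

noncomputable def entropy (p : α → ℝ) : ℝ := -∑ q, p q * log (p q)

theorem entropy_le_log_card (p : α → ℝ) (h0 : ∀ q, 0 ≤ p q) (h1 : ∑ q, p q = 1) :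
    entropy p ≤ log (Fintype.card α) := by
  have : Nonempty α := by
    by_contra h
    simp [not_nonempty_iff.mp h] at h1
  have hc : (0 : ℝ) < (Fintype.card α : ℝ)⁻¹ := by positivity
  have hJensen := concaveOn_negMulLog.le_map_sum (t := univ)
    (w := fun _ => (Fintype.card α : ℝ)⁻¹) (p := p) (fun _ _ => hc.le) (by simp)
    (fun q _ => h0 q)
  simp only [smul_eq_mul, ← mul_sum, h1, mul_one, negMulLog, log_inv, neg_mul_neg,
    mul_le_mul_iff_right₀ hc] at hJensen
  simpa [entropy] using hJensen

theorem entropy_le_sSup_entropy_levelSet (f : (α → ℝ) → ℝ) (p : α → ℝ)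
    (h0 : ∀ q, 0 ≤ p q) (h1 : ∑ q, p q = 1) :
    entropy p ≤ sSup {x | ∃ p' : α → ℝ, (∀ q, 0 ≤ p' q) ∧ ∑ q, p' q = 1 ∧
      f p' = f p ∧ x = entropy p'} :=
  le_csSup ⟨log (Fintype.card α), by
    rintro _ ⟨p', h0', h1', -, rfl⟩
    exact entropy_le_log_card p' h0' h1'⟩
    ⟨p, h0, h1, rfl, rfl⟩

end Entropy

section EmpiricalDistribution

variable {α : Type*} [DecidableEq α] {n : ℕ}

def letterCount (w : Fin n → α) (q : α) : ℕ := #{k | w k = q}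

noncomputable def empirical (w : Fin n → α) (q : α) : ℝ := letterCount w q / n

theorem empirical_nonneg (w : Fin n → α) (q : α) : 0 ≤ empirical w q := by
  unfold empirical; positivity

theorem empirical_apply_self_pos (w : Fin n → α) (k : Fin n) : 0 < empirical w (w k) := by
  have hk : 0 < letterCount w (w k) := card_pos.mpr ⟨k, by simp⟩
  have hn : 0 < n := k.pos
  unfold empirical; positivity

theorem natCast_mul_empirical (w : Fin n → α) (q : α) :
    n * empirical w q = letterCount w q := by
  rcases eq_or_ne n 0 with rfl | hn
  · simp [letterCount]
  · exact mul_div_cancel₀ _ (by exact_mod_cast hn)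

variable [Fintype α]

theorem sum_letterCount (w : Fin n → α) : ∑ q, letterCount w q = n := by
  simpa [letterCount] using (card_eq_sum_card_fiberwise (f := w) (s := univ) (t := univ)
    fun _ _ => mem_univ _).symm

theorem sum_empirical (hn : n ≠ 0) (w : Fin n → α) : ∑ q, empirical w q = 1 := by
  simp only [empirical, ← sum_div, ← Nat.cast_sum, sum_letterCount]
  exact div_self (by exact_mod_cast hn)

theorem prod_comp_eq_prod_pow_letterCount {M : Type*} [CommMonoid M] (f : α → M)
    (w : Fin n → α) : ∏ k, f (w k) = ∏ q, f q ^ letterCount w q := by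
  simp_rw [letterCount, ← prod_const, prod_fiberwise']

theorem prod_empirical_eq_exp (w : Fin n → α) :
    ∏ k, empirical w (w k) = exp (-(n * entropy (empirical w))) := by
  have hlog : -(n * entropy (empirical w)) = ∑ q, letterCount w q * log (empirical w q) := by
    rw [entropy, mul_neg, neg_neg, mul_sum]
    simp only [← mul_assoc, natCast_mul_empirical]
  rw [hlog, exp_sum, prod_comp_eq_prod_pow_letterCount]
  refine prod_congr rfl fun q _ => ?_
  rcases Nat.eq_zero_or_pos (letterCount w q) with h | h
  · simp [h]
  · obtain ⟨k, -, rfl⟩ : ∃ k ∈ univ, w k = q := by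
      simpa [letterCount, Finset.card_pos, Finset.Nonempty] using h
    rw [exp_nat_mul, exp_log (empirical_apply_self_pos w k)]

theorem card_letterCount_eq_le_exp_entropy (w₀ : Fin n → α) :
    (#{w : Fin n → α | letterCount w = letterCount w₀} : ℝ) ≤
      exp (n * entropy (empirical w₀)) := by
  have hmass : ∀ w ∈ ({w | letterCount w = letterCount w₀} : Finset (Fin n → α)),
      ∏ k, empirical w₀ (w k) = exp (-(n * entropy (empirical w₀))) := by
    intro w hw
    rw [← prod_empirical_eq_exp, prod_comp_eq_prod_pow_letterCount,
      prod_comp_eq_prod_pow_letterCount, (mem_filter.mp hw).2]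
  have htotal : ∑ w : Fin n → α, ∏ k, empirical w₀ (w k) = 1 := by
    rw [← Fintype.sum_pow]
    rcases eq_or_ne n 0 with rfl | hn
    · exact pow_zero _
    · rw [sum_empirical hn, one_pow]
  have hclass : ∑ w ∈ {w : Fin n → α | letterCount w = letterCount w₀},
      ∏ k, empirical w₀ (w k) ≤ 1 :=
    htotal ▸ sum_le_sum_of_subset_of_nonneg (subset_univ _)
      fun w _ _ => prod_nonneg fun k _ => empirical_nonneg _ _
  rwa [sum_congr rfl hmass, sum_const, nsmul_eq_mul, exp_neg, ← div_eq_mul_inv,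
    div_le_one (exp_pos _)] at hclass

theorem card_filter_le_of_entropy_le {C : (Fin n → α) → Prop} [DecidablePred C] {H : ℝ}
    (hC : ∀ w, C w → entropy (empirical w) ≤ H) :
    (#{w | C w} : ℝ) ≤ (n + 1) ^ Fintype.card α * exp (n * H) := by
  set types := Fintype.piFinset fun _ : α => range (n + 1)
  have hmaps : ∀ w ∈ ({w | C w} : Finset _), letterCount w ∈ types := by
    intro w _
    simpa [types, Nat.lt_succ_iff, letterCount] using
      fun q => (card_filter_le _ _).trans_eq (card_fin n)
  have hfiber : ∀ m ∈ types,
      (#{w ∈ {w | C w} | letterCount w = m} : ℝ) ≤ exp (n * H) := by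
    intro m _
    rcases eq_empty_or_nonempty {w ∈ {w | C w} | letterCount w = m} with h | ⟨w₀, hw₀⟩
    · simp [h, (exp_pos _).le]
    obtain ⟨hC₀, rfl⟩ : C w₀ ∧ letterCount w₀ = m := by simpa using hw₀
    calc _ ≤ (#{w | letterCount w = letterCount w₀} : ℝ) := by
          exact_mod_cast card_le_card (filter_subset_filter _ (subset_univ _))
      _ ≤ exp (n * entropy (empirical w₀)) := card_letterCount_eq_le_exp_entropy w₀
      _ ≤ exp (n * H) := by gcongr; exact hC w₀ hC₀
  calc (#{w | C w} : ℝ) = ∑ m ∈ types, (#{w ∈ {w | C w} | letterCount w = m} : ℝ) := by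
        exact_mod_cast card_eq_sum_card_fiberwise hmaps
    _ ≤ ∑ m ∈ types, exp (n * H) := sum_le_sum hfiber
    _ = _ := by simp [types, Fintype.card_piFinset]

end EmpiricalDistribution

theorem eventually_succ_pow_le_exp (d : ℕ) {ε : ℝ} (hε : 0 < ε) :
    ∀ᶠ n : ℕ in atTop, ((n : ℝ) + 1) ^ d ≤ exp (n * ε) := by
  have hshift : Tendsto (fun n : ℕ => (n : ℝ) + 1) atTop atTop :=
    tendsto_atTop_add_const_right _ 1 tendsto_natCast_atTop_atTop
  filter_upwards [hshift.eventually ((isLittleO_pow_exp_pos_mul_atTop d hε).bound (exp_pos (-ε))),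
    hshift.eventually (eventually_ge_atTop 0)] with n hn hn0
  rw [norm_of_nonneg (pow_nonneg hn0 d), norm_of_nonneg (exp_pos _).le, ← exp_add] at hn
  exact hn.trans_eq (by ring_nf)

section Sigma

variable {S : Type*} {P : S → Type*} [∀ a, Fintype (P a)]

noncomputable def rowEntropy [Fintype S] (p : (Σ a, P a) → ℝ) : ℝ :=
  entropy fun a => ∑ b, p ⟨a, b⟩

theorem rowEntropy_le_log_card [Fintype S] (p : (Σ a, P a) → ℝ) (h0 : ∀ q, 0 ≤ p q)
    (h1 : ∑ q, p q = 1) : rowEntropy p ≤ log (Fintype.card S) :=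
  entropy_le_log_card _ (fun a => sum_nonneg fun b _ => h0 _) (by rwa [← Fintype.sum_sigma])

variable [DecidableEq S] [DecidableEq (Σ a, P a)] {n : ℕ}

theorem sum_letterCount_sigma_mk (w : Fin n → Σ a, P a) (a : S) :
    ∑ b, letterCount w ⟨a, b⟩ = letterCount (fun k => (w k).1) a := by
  simp only [letterCount, card_filter]
  rw [sum_comm]
  refine sum_congr rfl fun k _ => ?_
  obtain ⟨a', b'⟩ := w k
  by_cases h : a' = a
  · subst h
    rw [sum_eq_single_of_mem b' (mem_univ _)
      fun b _ hb => if_neg fun h => hb (sigma_mk_injective h).symm, if_pos rfl, if_pos rfl]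
  · simp [h]

theorem rowEntropy_empirical [Fintype S] (w : Fin n → Σ a, P a) :
    rowEntropy (empirical w) = entropy (empirical fun k => (w k).1) := by
  simp only [rowEntropy, empirical, ← sum_div, ← Nat.cast_sum, sum_letterCount_sigma_mk]
  rfl

end Sigma

theorem stmt15_general (S : Type*) [Fintype S] [DecidableEq S] (P : S → Type*) [∀ a, Fintype (P a)]
    (ψ : ℝ → ℝ)
    (hψdef : ∀ z : ℝ, ψ z = sSup {x : ℝ | ∃ p : (Σ a : S, P a) → ℝ, (∀ q, 0 ≤ p q) ∧
      (∑ q : (Σ a : S, P a), p q) = 1 ∧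
      (-∑ a : S, (∑ b : P a, p ⟨a, b⟩) * Real.log (∑ b : P a, p ⟨a, b⟩)) = z ∧
      x = -∑ q : (Σ a : S, P a), p q * Real.log (p q)})
    (hψmono : AntitoneOn ψ
      (Set.Icc
        (-∑ a : S, ((Fintype.card (P a) : ℝ) / (Fintype.card (Σ a' : S, P a') : ℝ)) *
          Real.log ((Fintype.card (P a) : ℝ) / (Fintype.card (Σ a' : S, P a') : ℝ)))
        (Real.log (Fintype.card S))))
    (z : ℝ)
    (hz : z ∈ Set.Icc
      (-∑ a : S, ((Fintype.card (P a) : ℝ) / (Fintype.card (Σ a' : S, P a') : ℝ)) *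
        Real.log ((Fintype.card (P a) : ℝ) / (Fintype.card (Σ a' : S, P a') : ℝ)))
      (Real.log (Fintype.card S)))
    (ε : ℝ) (hε : 0 < ε) :
    ∃ N₀ : ℕ, ∀ n : ℕ, N₀ ≤ n →
      (Nat.card {w : Fin n → (Σ a : S, P a) //
          z ≤ -∑ a : S,
            (((Finset.univ.filter (fun k : Fin n => (w k).1 = a)).card : ℝ) / n) *
              Real.log (((Finset.univ.filter (fun k : Fin n => (w k).1 = a)).card : ℝ) / n)}
        : ℝ) ≤ Real.exp (n * (ψ z + ε)) := by
  classical
  obtain ⟨N₀, hN₀⟩ := eventually_atTop.mp ((eventually_gt_atTop 0).and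
    (eventually_succ_pow_le_exp (Fintype.card (Σ a, P a)) hε))
  refine ⟨N₀, fun n hn => ?_⟩
  obtain ⟨hn0, hpoly⟩ := hN₀ n hn
  have hword : ∀ w : Fin n → Σ a, P a, z ≤ entropy (empirical fun k => (w k).1) →
      entropy (empirical w) ≤ ψ z := by
    intro w hzw
    rw [← rowEntropy_empirical] at hzw
    have hprob := sum_empirical hn0.ne' w
    calc entropy (empirical w) ≤ ψ (rowEntropy (empirical w)) := by
          rw [hψdef]
          exact entropy_le_sSup_entropy_levelSet rowEntropy _ (empirical_nonneg w) hprob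
      _ ≤ ψ z := hψmono hz ⟨hz.1.trans hzw,
          rowEntropy_le_log_card _ (empirical_nonneg w) hprob⟩ hzw
  rw [Nat.card_eq_fintype_card, Fintype.card_subtype]
  calc _ ≤ ((n : ℝ) + 1) ^ Fintype.card (Σ a, P a) * exp (n * ψ z) :=
        card_filter_le_of_entropy_le hword
    _ ≤ exp (n * ε) * exp (n * ψ z) := by gcongr
    _ = exp (n * (ψ z + ε)) := by rw [← exp_add]; ring_nf

/-- If `ψ(z) = sup { h(p) : h_r(p) = z }` is antitone on `[h_r(p_D), log R]`, then for every
`z` in this interval and every `ε > 0` there is `N₀` such that for all `n ≥ N₀` the number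
of words in `Q^n` with empirical row-entropy at least `z` is at most `exp (n (ψ(z) + ε))`. -/
theorem stmt15 (S : Type*) [Fintype S] [Nonempty S] [DecidableEq S] (P : S → Type*) [∀ a, Fintype (P a)]
    [∀ a, Nonempty (P a)]
    (ψ : ℝ → ℝ)
    (hψdef : ∀ z : ℝ, ψ z = sSup {x : ℝ | ∃ p : (Σ a : S, P a) → ℝ, (∀ q, 0 ≤ p q) ∧
      (∑ q : (Σ a : S, P a), p q) = 1 ∧
      (-∑ a : S, (∑ b : P a, p ⟨a, b⟩) * Real.log (∑ b : P a, p ⟨a, b⟩)) = z ∧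
      x = -∑ q : (Σ a : S, P a), p q * Real.log (p q)})
    (hψmono : AntitoneOn ψ
      (Set.Icc
        (-∑ a : S, ((Fintype.card (P a) : ℝ) / (Fintype.card (Σ a' : S, P a') : ℝ)) *
          Real.log ((Fintype.card (P a) : ℝ) / (Fintype.card (Σ a' : S, P a') : ℝ)))
        (Real.log (Fintype.card S))))
    (z : ℝ)
    (hz : z ∈ Set.Icc
      (-∑ a : S, ((Fintype.card (P a) : ℝ) / (Fintype.card (Σ a' : S, P a') : ℝ)) *
        Real.log ((Fintype.card (P a) : ℝ) / (Fintype.card (Σ a' : S, P a') : ℝ)))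
      (Real.log (Fintype.card S)))
    (ε : ℝ) (hε : 0 < ε) :
    ∃ N₀ : ℕ, ∀ n : ℕ, N₀ ≤ n →
      (Nat.card {w : Fin n → (Σ a : S, P a) //
          z ≤ -∑ a : S,
            (((Finset.univ.filter (fun k : Fin n => (w k).1 = a)).card : ℝ) / n) *
              Real.log (((Finset.univ.filter (fun k : Fin n => (w k).1 = a)).card : ℝ) / n)}
        : ℝ) ≤ Real.exp (n * (ψ z + ε)) :=
  stmt15_general S P ψ hψdef hψmono z hz ε hε
end
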